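/- Let g₁, g₂ ∈ ℝ³ be unit vectors that are not parallel, let h₁, h₂ ∈ ℝ³ be arbitrary vectors, and let s ∈ ℝ. Then the 12×6 block matrix Q = [[P_{g₁}, s P_{g₁}], [−h₁g₁ᵀ, P_{g₁} − s h₁g₁ᵀ], [P_{g₂}, s P_{g₂}], [−h₂g₂ᵀ, P_{g₂} − s h₂g₂ᵀ]], where P_{gⱼ} = I₃ − gⱼgⱼᵀ, has rank 6 (full column rank). -/

import Mathlib

open Matrix

/-- The orthogonal projection matrix `P_g = I₃ − g gᵀ` associated with `g ∈ ℝ³`. -/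
noncomputable def projMat (g : Fin 3 → ℝ) : Matrix (Fin 3) (Fin 3) ℝ :=
  (1 : Matrix (Fin 3) (Fin 3) ℝ) - vecMulVec g g

/-- The `12 × 6` two-observer observability matrix
`Q = [[P_{g₁}, s P_{g₁}], [−h₁g₁ᵀ, P_{g₁} − s h₁g₁ᵀ],
      [P_{g₂}, s P_{g₂}], [−h₂g₂ᵀ, P_{g₂} − s h₂g₂ᵀ]]`.
Rows are indexed by `Fin 2 × (Fin 3 ⊕ Fin 3)` (observer, then bearing/rate block row),
columns by `Fin 3 ⊕ Fin 3` (position block, velocity block). -/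
noncomputable def obsMat2 (s : ℝ) (g h : Fin 2 → Fin 3 → ℝ) :
    Matrix (Fin 2 × (Fin 3 ⊕ Fin 3)) (Fin 3 ⊕ Fin 3) ℝ :=
  fun p c =>
    match p.2, c with
    | Sum.inl r, Sum.inl c => projMat (g p.1) r c
    | Sum.inl r, Sum.inr c => s * projMat (g p.1) r c
    | Sum.inr r, Sum.inl c => -(h p.1 r * g p.1 c)
    | Sum.inr r, Sum.inr c => projMat (g p.1) r c - s * (h p.1 r * g p.1 c)

/-! The rows of `Q u` for `u = (x, y)` say `P_{g_j} (x + s y) = 0` and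
`P_{g_j} y = (g_j ⬝ x + s g_j ⬝ y) h_j`. Since `ker P_g ⊆ ℝ g` and the lines `ℝ g₀`, `ℝ g₁`
of two non-parallel unit vectors meet only in `0`, the first pair forces `x + s y = 0`; the
second pair then reads `P_{g_j} y = 0`, so `y = 0` and hence `x = 0`. -/

lemma projMat_mulVec (g w : Fin 3 → ℝ) : projMat g *ᵥ w = w - (g ⬝ᵥ w) • g := by
  rw [projMat, sub_mulVec, one_mulVec, vecMulVec_mulVec, op_smul_eq_smul]

lemma eq_smul_of_projMat_mulVec_eq_zero {g w : Fin 3 → ℝ} (hw : projMat g *ᵥ w = 0) :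
    w = (g ⬝ᵥ w) • g :=
  sub_eq_zero.mp (projMat_mulVec g w ▸ hw)

lemma eq_zero_of_smul_eq_smul {n : Type*} [Fintype n] {g₁ g₂ : n → ℝ}
    (h₁ : g₁ ⬝ᵥ g₁ = 1) (h₂ : g₂ ⬝ᵥ g₂ = 1) (hne : g₁ ≠ g₂) (hne' : g₁ ≠ -g₂)
    {a b : ℝ} (hab : a • g₁ = b • g₂) : a = 0 := by
  by_contra ha
  have hg : g₁ = (b / a) • g₂ := by
    rw [div_eq_inv_mul, mul_smul, ← hab, inv_smul_smul₀ ha]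
  have hsq : (b / a) ^ 2 = 1 := by
    rw [hg, smul_dotProduct, dotProduct_smul, h₂, smul_eq_mul, smul_eq_mul] at h₁
    linear_combination h₁
  rcases sq_eq_one_iff.mp hsq with h | h
  · exact hne (by rw [hg, h, one_smul])
  · exact hne' (by rw [hg, h, neg_one_smul])

lemma eq_zero_of_projMat_mulVec_eq_zero {g₁ g₂ w : Fin 3 → ℝ}
    (h₁ : g₁ ⬝ᵥ g₁ = 1) (h₂ : g₂ ⬝ᵥ g₂ = 1) (hne : g₁ ≠ g₂) (hne' : g₁ ≠ -g₂)
    (hw₁ : projMat g₁ *ᵥ w = 0) (hw₂ : projMat g₂ *ᵥ w = 0) : w = 0 := by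
  have hw₁' := eq_smul_of_projMat_mulVec_eq_zero hw₁
  have hw₂' := eq_smul_of_projMat_mulVec_eq_zero hw₂
  rw [hw₁', eq_zero_of_smul_eq_smul h₁ h₂ hne hne' (hw₁'.symm.trans hw₂'), zero_smul]

lemma obsMat2_mulVec_inl (s : ℝ) (g h : Fin 2 → Fin 3 → ℝ) (x y : Fin 3 → ℝ) (j : Fin 2)
    (r : Fin 3) :
    (obsMat2 s g h *ᵥ Sum.elim x y) (j, Sum.inl r) = (projMat (g j) *ᵥ (x + s • y)) r := by
  simp only [obsMat2, mulVec, dotProduct, Fintype.sum_sum_type, Fin.sum_univ_three, Sum.elim_inl,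
    Sum.elim_inr, Pi.add_apply, Pi.smul_apply, smul_eq_mul]
  ring

lemma obsMat2_mulVec_inr (s : ℝ) (g h : Fin 2 → Fin 3 → ℝ) (x y : Fin 3 → ℝ) (j : Fin 2)
    (r : Fin 3) :
    (obsMat2 s g h *ᵥ Sum.elim x y) (j, Sum.inr r) =
      (projMat (g j) *ᵥ y - (g j ⬝ᵥ (x + s • y)) • h j) r := by
  simp only [obsMat2, mulVec, dotProduct, Fintype.sum_sum_type, Fin.sum_univ_three, Sum.elim_inl,
    Sum.elim_inr, Pi.add_apply, Pi.sub_apply, Pi.smul_apply, smul_eq_mul]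
  ring

lemma eq_zero_of_obsMat2_mulVec_eq_zero {s : ℝ} {g : Fin 2 → Fin 3 → ℝ}
    (h : Fin 2 → Fin 3 → ℝ) (hg : ∀ j, g j ⬝ᵥ g j = 1) (hne : g 0 ≠ g 1) (hne' : g 0 ≠ -(g 1))
    {x y : Fin 3 → ℝ} (hxy : obsMat2 s g h *ᵥ Sum.elim x y = 0) : x = 0 ∧ y = 0 := by
  have hP {w : Fin 3 → ℝ} (hw : ∀ j, projMat (g j) *ᵥ w = 0) : w = 0 :=
    eq_zero_of_projMat_mulVec_eq_zero (hg 0) (hg 1) hne hne' (hw 0) (hw 1)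
  have hpos : x + s • y = 0 := hP fun j => funext fun r => by
    rw [← obsMat2_mulVec_inl s g h x y j r, hxy, Pi.zero_apply, Pi.zero_apply]
  have hvel : y = 0 := hP fun j => funext fun r => by
    simpa [obsMat2_mulVec_inr, hpos] using congrFun hxy (j, Sum.inr r)
  exact ⟨by simpa [hvel] using hpos, hvel⟩

/-- If `g₁, g₂ ∈ ℝ³` are non-parallel unit vectors, `h₁, h₂ ∈ ℝ³` are arbitrary,
and `s ∈ ℝ`, then the `12 × 6` two-observer observability matrix `Q` has full
column rank `6`. -/
theorem obsMat2_rank_eq_six (s : ℝ) (g h : Fin 2 → Fin 3 → ℝ)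
    (hg : ∀ j, g j ⬝ᵥ g j = 1)
    (hne : g 0 ≠ g 1) (hne' : g 0 ≠ -(g 1)) :
    (obsMat2 s g h).rank = 6 := by
  have hinj : Function.Injective (obsMat2 s g h).mulVecLin := by
    rw [← LinearMap.ker_eq_bot, LinearMap.ker_eq_bot']
    intro u hu
    rw [← Sum.elim_comp_inl_inr u] at hu ⊢
    obtain ⟨hx, hy⟩ := eq_zero_of_obsMat2_mulVec_eq_zero h hg hne hne' hu
    rw [hx, hy, Sum.elim_zero_zero]
  rw [rank, LinearMap.finrank_range_of_inj hinj]
  simp
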